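/- arXiv:1811.08850 — 5 statements merged into one kernel-verified Lean document; each statement's English description precedes it below -/
import Mathlib

section
/- For any commutative monoid M, the monoid-valued functor M^(−) is zippable: the map ⟨M^(X+!), M^(!+Y)⟩ : M^(X+Y) → M^(X+1) × M^(1+Y) is injective for all sets X, Y. -/
namespace Finsupp

variable {M : Type*} [AddCommMonoid M]

theorem mapDomain_apply_of_fiber_eq_singleton {α β : Type*} {f : α → β} (v : α →₀ M) {a : α}
    (hfiber : ∀ i, f i = f a → i = a) : mapDomain f v (f a) = v a := by
  classical
  rw [mapDomain_apply_eq_sum]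
  refine Finset.sum_eq_single a (fun i hi hia => absurd (hfiber i (Finset.mem_filter.1 hi).2) hia)
    fun ha => ?_
  exact notMem_support_iff.1 fun ha' => ha (Finset.mem_filter.2 ⟨ha', rfl⟩)

variable {X X' Y Y' : Type*}

theorem mapDomain_sumMap_id_apply_inl (g : Y → Y') (v : X ⊕ Y →₀ M) (x : X) :
    mapDomain (Sum.map id g) v (.inl x) = v (.inl x) :=
  mapDomain_apply_of_fiber_eq_singleton (f := Sum.map id g) (a := .inl x) v <| by
    rintro (i | i) h <;> simp_all

theorem mapDomain_sumMap_id_apply_inr (f : X → X') (v : X ⊕ Y →₀ M) (y : Y) :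
    mapDomain (Sum.map f id) v (.inr y) = v (.inr y) :=
  mapDomain_apply_of_fiber_eq_singleton (f := Sum.map f id) (a := .inr y) v <| by
    rintro (i | i) h <;> simp_all

/-- Each component of `X ⊕ Y` survives, unchanged, in one of the two pushforwards. -/
theorem injective_mapDomain_sumMap_prod (f : X → X') (g : Y → Y') :
    Function.Injective fun v : X ⊕ Y →₀ M =>
      (mapDomain (Sum.map id g) v, mapDomain (Sum.map f id) v) := by
  intro v w hvw
  obtain ⟨hleft, hright⟩ := Prod.mk.inj hvw
  ext (x | y)
  · rw [← mapDomain_sumMap_id_apply_inl g, hleft, mapDomain_sumMap_id_apply_inl]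
  · rw [← mapDomain_sumMap_id_apply_inr f, hright, mapDomain_sumMap_id_apply_inr]

end Finsupp

/-- The monoid-valued functor `M^(−)` is zippable: pushing forward finitely
supported `M`-valued functions along `X+! : X+Y → X+1` and `!+Y : X+Y → 1+Y`
is jointly injective. -/
theorem monoidValued_zippable (M : Type*) [AddCommMonoid M] (X Y : Type*) :
    Function.Injective (fun f : (X ⊕ Y) →₀ M =>
      (Finsupp.mapDomain (Sum.map (id : X → X) (fun _ : Y => PUnit.unit)) f,
       Finsupp.mapDomain (Sum.map (fun _ : X => PUnit.unit) (id : Y → Y)) f)) :=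
  Finsupp.injective_mapDomain_sumMap_prod _ _
end

section
/- Zippable functors on Set are closed under binary coproducts: if F and G are zippable, then so is the functor H with HX = FX + GX (disjoint union). -/
open CategoryTheory

/-- A set functor is zippable if `⟨F(X+!), F(!+Y)⟩ : F(X+Y) → F(X+1) × F(1+Y)`
is injective for all `X, Y`. -/
def Zippable (F : Type u ⥤ Type u) : Prop :=
  ∀ X Y : Type u,
    Function.Injective (fun t : F.obj (X ⊕ Y) =>
      (F.map (TypeCat.ofHom (Sum.map (id : X → X) (fun _ : Y => PUnit.unit))) t,
       F.map (TypeCat.ofHom (Sum.map (fun _ : X => PUnit.unit) (id : Y → Y))) t))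

/-- The pointwise coproduct (disjoint union) of two set functors. -/
def coprodFunctor (F G : Type u ⥤ Type u) : Type u ⥤ Type u where
  obj X := F.obj X ⊕ G.obj X
  map f := TypeCat.ofHom (Sum.map (F.map f) (G.map f))
  map_id := by
    intro X; ext p; cases p <;> simp
  map_comp := by
    intro X Y Z f g; ext p; cases p <;> simp

theorem Function.Injective.sumMap_pair {α β γ γ' δ δ' : Type*}
    {f : α → γ} {f' : α → γ'} {g : β → δ} {g' : β → δ'}
    (hf : Function.Injective fun a => (f a, f' a))
    (hg : Function.Injective fun b => (g b, g' b)) :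
    Function.Injective fun t => (Sum.map f g t, Sum.map f' g' t) := by
  rintro (a | b) (a' | b') h
  · exact congrArg Sum.inl (hf (by simpa using h))
  · simp at h
  · simp at h
  · exact congrArg Sum.inr (hg (by simpa using h))

/-- Zippable functors are closed under binary coproducts. -/
theorem zippable_coprod (F G : Type u ⥤ Type u) (hF : Zippable F) (hG : Zippable G) :
    Zippable (coprodFunctor F G) :=
  -- the zipping map of `coprodFunctor F G` is definitionally the `Sum.map` of those of `F` and `G`
  fun X Y => (hF X Y).sumMap_pair (hG X Y)
end

section
/- The composite functor P_ω ∘ P_ω (double finite powerset) is not zippable: there exist sets X, Y and distinct elements t₁ ≠ t₂ of P_ω P_ω(X+Y) that are identified by the map ⟨P_ωP_ω(X+!), P_ωP_ω(!+Y)⟩. -/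
/-!
The matchings `{{x₁, y₁}, {x₂, y₂}}` and `{{x₁, y₂}, {x₂, y₁}}` of two left points with two right
points are different, yet each projection forgets one side and only remembers which points occur on
the other: both become `{{x₁, ∗}, {x₂, ∗}}` and `{{∗, y₁}, {∗, y₂}}`. Zipping the projections
cannot recover which `x` was paired with which `y`.
-/

namespace Sum

variable {X Y X' Y' : Type*}

def pairSet (x : X) (y : Y) : Set (X ⊕ Y) := {inl x, inr y}

theorem pairSet_eq_pairSet_iff {x x' : X} {y y' : Y} :
    pairSet x y = pairSet x' y' ↔ x = x' ∧ y = y' := by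
  refine ⟨fun h => ⟨?_, ?_⟩, fun ⟨hx, hy⟩ => hx ▸ hy ▸ rfl⟩
  · have : (inl x : X ⊕ Y) ∈ pairSet x' y' := h ▸ Set.mem_insert _ _
    simpa [pairSet] using this
  · have : (inr y : X ⊕ Y) ∈ pairSet x' y' := h ▸ Set.mem_insert_of_mem _ rfl
    simpa [pairSet] using this

theorem image_map_pairSet (f : X → X') (g : Y → Y') (x : X) (y : Y) :
    Sum.map f g '' pairSet x y = pairSet (f x) (g y) := by
  simp only [pairSet, Set.image_pair, map_inl, map_inr]

theorem image_image_map_pairSet_pair (f : X → X') (g : Y → Y') (x₁ x₂ : X) (y₁ y₂ : Y) :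
    Set.image (Sum.map f g) '' {pairSet x₁ y₁, pairSet x₂ y₂} =
      {pairSet (f x₁) (g y₁), pairSet (f x₂) (g y₂)} := by
  simp only [Set.image_pair, image_map_pairSet]

theorem pairSet_pair_ne_swap {x₁ x₂ : X} {y₁ y₂ : Y} (hx : x₁ ≠ x₂) (hy : y₁ ≠ y₂) :
    ({pairSet x₁ y₁, pairSet x₂ y₂} : Set (Set (X ⊕ Y))) ≠ {pairSet x₁ y₂, pairSet x₂ y₁} := by
  intro h
  have hmem : pairSet x₁ y₁ ∈ ({pairSet x₁ y₂, pairSet x₂ y₁} : Set (Set (X ⊕ Y))) :=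
    h ▸ Set.mem_insert _ _
  rcases hmem with h' | h' <;> simp_all [pairSet_eq_pairSet_iff]

end Sum

/-- The double finite powerset functor `P_ω ∘ P_ω` is not zippable: there are
sets `X, Y` and distinct finite sets of finite subsets of `X + Y` that are
identified by `⟨P_ωP_ω(X+!), P_ωP_ω(!+Y)⟩`. -/
theorem doublePowerset_not_zippable :
    ∃ (X Y : Type) (t₁ t₂ : Set (Set (X ⊕ Y))),
      t₁.Finite ∧ (∀ s ∈ t₁, s.Finite) ∧
      t₂.Finite ∧ (∀ s ∈ t₂, s.Finite) ∧
      t₁ ≠ t₂ ∧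
      (Set.image (Sum.map (id : X → X) (fun _ : Y => PUnit.unit))) '' t₁ =
        (Set.image (Sum.map (id : X → X) (fun _ : Y => PUnit.unit))) '' t₂ ∧
      (Set.image (Sum.map (fun _ : X => PUnit.unit) (id : Y → Y))) '' t₁ =
        (Set.image (Sum.map (fun _ : X => PUnit.unit) (id : Y → Y))) '' t₂ := by
  refine ⟨Bool, Bool, {Sum.pairSet true true, Sum.pairSet false false},
    {Sum.pairSet true false, Sum.pairSet false true}, Set.toFinite _, fun s _ => Set.toFinite s,
    Set.toFinite _, fun s _ => Set.toFinite s,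
    Sum.pairSet_pair_ne_swap (by decide) (by decide), ?_, ?_⟩
  · simp only [Sum.image_image_map_pairSet_pair, id_eq]
  · simp only [Sum.image_image_map_pairSet_pair, id_eq]
    exact Set.pair_comm _ _
end

section
/- Let (X, f, (μ_k)) be a weighted tree automaton over a commutative monoid M with signature Σ, and let c : X → M^(ΣX) be the associated coalgebra with c(x)(σ(x₁,…,x_k)) = μ_k(σ)((x₁,…,x_k), x). An equivalence relation R on X is a backward bisimulation if and only if the canonical quotient map e : X → X/R is an M^(Σ(−))-coalgebra homomorphism, i.e., M^(Σe) ∘ c factors through e. -/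
open Classical

/-- Pushforward of an `M`-valued function along `g : A → B` (the action
`M^(g)` of the monoid-valued functor), for finite `A`. -/
noncomputable def pushforward {A B M : Type*} [Fintype A] [AddCommMonoid M]
    (g : A → B) (v : A → M) : B → M :=
  fun b => ∑ a : A, if g a = b then v a else 0

lemma pushforward_eval
    {M : Type*} [AddCommMonoid M]
    {Sig : Type} [Fintype Sig] {ar : Sig → ℕ}
    {X : Type} [Fintype X]
    (μ : (σ : Sig) → (Fin (ar σ) → X) → X → M)
    (R : Setoid X) (x : X) (σ : Sig) (L : Fin (ar σ) → Quotient R) :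
    pushforward
      (fun t : (Σ σ : Sig, (Fin (ar σ) → X)) =>
        (⟨t.1, fun i => Quotient.mk R (t.2 i)⟩ :
          Σ σ : Sig, (Fin (ar σ) → Quotient R)))
      (fun t => μ t.1 t.2 x) ⟨σ, L⟩ =
    ∑ w : Fin (ar σ) → X,
      if (fun i => Quotient.mk R (w i)) = L then μ σ w x else 0 := by
  unfold pushforward
  rw [← Finset.univ_sigma_univ, Finset.sum_sigma]
  rw [Finset.sum_eq_single σ]
  · apply Finset.sum_congr rfl
    intro w _
    congr 1
    simp [Sigma.mk.inj_iff]
  · intro σ' _ hne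
    apply Finset.sum_eq_zero
    intro w _
    simp [Sigma.mk.inj_iff, hne]
  · simp

/-- Backward bisimulation on a weighted tree automaton coincides with being a
coalgebra congruence: an equivalence relation `R` is a backward bisimulation
iff the quotient map `e : X → X/R` is an `M^(Σ(−))`-coalgebra homomorphism,
i.e. `M^(Σe) ∘ c` factors through `e`. -/
theorem backwardBisim_iff_coalgebraHom
    (M : Type*) [AddCommMonoid M]
    (Sig : Type) [Fintype Sig] (ar : Sig → ℕ)
    (X : Type) [Fintype X]
    (μ : (σ : Sig) → (Fin (ar σ) → X) → X → M)
    (R : Setoid X) :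
    -- the quotient map e, the functor action Σe, and the coalgebra c
    (∀ p q : X, R.r p q →
        ∀ (σ : Sig) (L : Fin (ar σ) → Quotient R),
          (∑ w : Fin (ar σ) → X,
              if (fun i => Quotient.mk R (w i)) = L then μ σ w p else 0) =
          (∑ w : Fin (ar σ) → X,
              if (fun i => Quotient.mk R (w i)) = L then μ σ w q else 0)) ↔
    (∃ r : Quotient R → ((Σ σ : Sig, (Fin (ar σ) → Quotient R)) → M),
        ∀ x : X,
          r (Quotient.mk R x) =
            pushforward
              (fun t : (Σ σ : Sig, (Fin (ar σ) → X)) =>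
                (⟨t.1, fun i => Quotient.mk R (t.2 i)⟩ :
                  Σ σ : Sig, (Fin (ar σ) → Quotient R)))
              (fun t => μ t.1 t.2 x)) := by
  constructor
  · intro h
    refine ⟨Quotient.lift (fun x => pushforward
        (fun t : (Σ σ : Sig, (Fin (ar σ) → X)) =>
          (⟨t.1, fun i => Quotient.mk R (t.2 i)⟩ :
            Σ σ : Sig, (Fin (ar σ) → Quotient R)))
        (fun t => μ t.1 t.2 x)) ?_, fun x => rfl⟩
    intro p q hpq
    funext ⟨σ, L⟩
    rw [pushforward_eval, pushforward_eval]
    exact h p q hpq σ L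
  · rintro ⟨r, hr⟩ p q hpq σ L
    rw [← pushforward_eval μ R p σ L, ← pushforward_eval μ R q σ L,
      ← hr p, ← hr q, Quotient.sound hpq]
end

section
/- Behavioural equivalence is preserved and reflected by subfunctor inclusion: if α : G ⇒ F is a natural transformation with injective components, c : C → GC is a G-coalgebra, and c' = α_C ∘ c is the induced F-coalgebra, then two states x, y ∈ C are behaviourally equivalent in (C,c) as a G-coalgebra if and only if they are behaviourally equivalent in (C,c') as an F-coalgebra, provided F preserves injections and behavioural equivalence is taken as kernel of the map to the final/minimal quotient (equivalently: for finite C, a surjection h : C → D is the quotient by a G-coalgebra congruence iff it is by the corresponding F-coalgebra congruence). -/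
open CategoryTheory

/-- Behavioural equivalence of two states of an `F`-coalgebra: there is a
coalgebra morphism merging them. -/
def BehEq (F : Type u ⥤ Type u) {C : Type u} (c : C → F.obj C) (x y : C) : Prop :=
  ∃ (D : Type u) (d : D → F.obj D) (h : C → D),
    (∀ z : C, F.map (TypeCat.ofHom h) (c z) = d (h z)) ∧ h x = h y

/-!
A `G`-coalgebra morphism is an `F`-coalgebra morphism after composing with `α`, by naturality.
Conversely, let `h` be an `F`-coalgebra morphism out of `(C, α_C ∘ c)`. Then
`α_D (G h (c z)) = d (h z)`, so by injectivity of `α_D` the map `G h ∘ c` factors through `h`.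
Write `h = m ∘ e` with `e : C → C/ker h` the quotient map and `m` injective. Through `α`, `G`
inherits preservation of injections from `F`, so `G m` is injective, and `G m ∘ G e = G h` shows
that `G e ∘ c` also factors through `h`: it descends to a `G`-coalgebra structure on `C/ker h`
for which `e` is a morphism merging the same states as `h`.
-/

section

variable {F G : Type u ⥤ Type u}

def CategoryTheory.Functor.PreservesInjections (F : Type u ⥤ Type u) : Prop :=
  ∀ (A B : Type u) (f : A → B),
    Function.Injective f → Function.Injective (F.map (TypeCat.ofHom f))

theorem CategoryTheory.Functor.PreservesInjections.of_natTrans (α : G ⟶ F)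
    (hα : ∀ X : Type u, Function.Injective (α.app X)) (hF : F.PreservesInjections) :
    G.PreservesInjections := by
  intro A B f hf u v huv
  apply hα A
  apply hF A B f hf
  rw [← NatTrans.naturality_apply, ← NatTrans.naturality_apply, huv]

theorem BehEq.map_natTrans (α : G ⟶ F) {C : Type u} {c : C → G.obj C} {x y : C}
    (hxy : BehEq G c x y) : BehEq F (fun z => α.app C (c z)) x y := by
  obtain ⟨D, d, h, hmor, hhxy⟩ := hxy
  refine ⟨D, fun w => α.app D (d w), h, fun z => ?_, hhxy⟩
  rw [← NatTrans.naturality_apply, hmor]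

theorem BehEq.of_factorsThrough (hG : G.PreservesInjections) {C D : Type u}
    {c : C → G.obj C} {h : C → D}
    (hfac : Function.FactorsThrough (fun z => G.map (TypeCat.ofHom h) (c z)) h)
    {x y : C} (hxy : h x = h y) : BehEq G c x y := by
  let e : C → Quotient (Setoid.ker h) := Quotient.mk _
  have hGm_Ge (a : G.obj C) :
      G.map (TypeCat.ofHom (Setoid.kerLift h)) (G.map (TypeCat.ofHom e) a) =
        G.map (TypeCat.ofHom h) a := by
    rw [← Functor.map_comp_apply]
    rfl
  have hdescend : Function.FactorsThrough (fun z => G.map (TypeCat.ofHom e) (c z)) h :=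
    fun z z' hzz' => hG _ _ _ (Setoid.kerLift_injective h) <| by
      rw [hGm_Ge, hGm_Ge]
      exact hfac hzz'
  exact ⟨_, Quotient.lift _ fun _ _ hzz' => hdescend hzz', e, fun _ => rfl, Quotient.sound hxy⟩

end

/-- Behavioural equivalence is preserved and reflected by subfunctor inclusion:
if `α : G ⟶ F` has injective components and `F` preserves injections, then for a
`G`-coalgebra `c` and the induced `F`-coalgebra `α_C ∘ c`, two states are
behaviourally equivalent as `G`-coalgebra states iff they are as
`F`-coalgebra states. -/
theorem behEq_subfunctor (F G : Type u ⥤ Type u) (α : G ⟶ F)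
    (hα : ∀ X : Type u, Function.Injective (α.app X))
    (hF : ∀ (A B : Type u) (f : A → B),
      Function.Injective f → Function.Injective (F.map (TypeCat.ofHom f)))
    (C : Type u) (c : C → G.obj C) (x y : C) :
    BehEq G c x y ↔ BehEq F (fun z => α.app C (c z)) x y := by
  refine ⟨BehEq.map_natTrans α, ?_⟩
  rintro ⟨D, d, h, hmor, hxy⟩
  have hfac : Function.FactorsThrough (fun z => G.map (TypeCat.ofHom h) (c z)) h :=
    fun z z' hzz' => hα D <| by
      rw [NatTrans.naturality_apply, NatTrans.naturality_apply, hmor z, hmor z', hzz']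
  exact BehEq.of_factorsThrough (.of_natTrans α hα hF) hfac hxy
end
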